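/- arXiv:1308.3286 — 3 statements merged into one kernel-verified Lean document; each statement's English description precedes it below -/
import Mathlib

section
/- Let (ω_0,...,ω_{n+1}) be an algebraic key sequence and suppose p_k·ω_k = β_{k,0}ω_0 + β_{k,1}ω_1 + ... + β_{k,k-1}ω_{k-1} is the unique representation with 0 ≤ β_{k,j} < p_j for 1 ≤ j ≤ k-1. Then β_{k,0} ≥ 0. -/
/-!
Algebraicity lets us rewrite `p_k ω_k` as a nonnegative combination `∑ c_j ω_j`. Comparing it with
`∑ β_j ω_j` modulo `d_{m-1}` shows that the top coefficients agree modulo `p_m`, and since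
`0 ≤ β_m < p_m ≤ c_m + p_m` we get `c_m = β_m + t p_m` with `t ≥ 0`. Replacing `t p_m ω_m` by a
nonnegative combination of `ω_0, …, ω_{m-1}` (algebraicity again) lowers the length of both sums,
and at length one `β_0 ω_0 = c_0 ω_0` with `c_0 ≥ 0`.
-/

open Finset

lemma exists_sum_range_eq_of_mem_closure {ω : ℕ → ℕ} {k v : ℕ}
    (hv : v ∈ AddSubmonoid.closure (ω '' {j | j < k})) :
    ∃ c : ℕ → ℕ, v = ∑ j ∈ range k, c j * ω j := by
  induction hv using AddSubmonoid.closure_induction with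
  | mem x hx =>
    obtain ⟨j, hj, rfl⟩ := hx
    exact ⟨fun i => if i = j then 1 else 0, by simp [ite_mul, hj.out]⟩
  | zero => exact ⟨0, by simp⟩
  | add a b _ _ iha ihb =>
    obtain ⟨c, rfl⟩ := iha
    obtain ⟨c', rfl⟩ := ihb
    exact ⟨c + c', by simp [add_mul, sum_add_distrib]⟩

lemma gcd_range_succ_succ (ω : ℕ → ℕ) (m : ℕ) :
    (range (m + 2)).gcd ω = Nat.gcd ((range (m + 1)).gcd ω) (ω (m + 1)) := by
  rw [range_add_one, gcd_insert, Nat.gcd_comm]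
  rfl

lemma top_coeff_modEq_of_sum_range_eq {ω : ℕ → ℕ} (h0 : 0 < ω 0) {m : ℕ} {x y : ℕ → ℤ}
    (h : ∑ j ∈ range (m + 2), x j * ω j = ∑ j ∈ range (m + 2), y j * ω j) :
    x (m + 1) ≡ y (m + 1) [ZMOD ((range (m + 1)).gcd ω / (range (m + 2)).gcd ω : ℕ)] := by
  set g := (range (m + 1)).gcd ω
  have hg : 0 < g := Nat.pos_of_ne_zero fun hg =>
    h0.ne' (gcd_eq_zero_iff.mp hg 0 (mem_range.mpr m.succ_pos))
  have hdvd (z : ℕ → ℤ) : (g : ℤ) ∣ ∑ j ∈ range (m + 1), z j * ω j :=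
    dvd_sum fun j hj => dvd_mul_of_dvd_right (Int.natCast_dvd_natCast.mpr (gcd_dvd hj)) _
  have htop : x (m + 1) * ω (m + 1) ≡ y (m + 1) * ω (m + 1) [ZMOD g] := by
    rw [sum_range_succ _ (m + 1), sum_range_succ _ (m + 1)] at h
    refine Int.modEq_iff_dvd.mpr ?_
    rw [show y (m + 1) * ω (m + 1) - x (m + 1) * ω (m + 1) =
      ∑ j ∈ range (m + 1), x j * ω j - ∑ j ∈ range (m + 1), y j * ω j by linarith]
    exact dvd_sub (hdvd x) (hdvd y)
  have := htop.cancel_right_div_gcd (by exact_mod_cast hg)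
  rwa [Int.gcd_natCast_natCast, ← gcd_range_succ_succ, ← Int.natCast_div] at this

theorem zero_coeff_nonneg_of_sum_range_eq {ω p : ℕ → ℕ} (h0 : 0 < ω 0)
    (hp : ∀ k, p (k + 1) = (range (k + 1)).gcd ω / (range (k + 2)).gcd ω) {m : ℕ}
    (halg : ∀ k, 1 ≤ k → k ≤ m → p k * ω k ∈ AddSubmonoid.closure (ω '' {j | j < k}))
    {β : ℕ → ℤ} (hβ : ∀ j, 1 ≤ j → j ≤ m → 0 ≤ β j ∧ β j < p j) (c : ℕ → ℕ)
    (h : ∑ j ∈ range (m + 1), β j * ω j = ∑ j ∈ range (m + 1), (c j : ℤ) * ω j) :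
    0 ≤ β 0 := by
  induction m generalizing c with
  | zero =>
    simp only [zero_add, range_one, sum_singleton] at h
    have : β 0 = c 0 := mul_right_cancel₀ (by exact_mod_cast h0.ne') h
    omega
  | succ m ih =>
    obtain ⟨hβ0, hβp⟩ := hβ (m + 1) (by omega) le_rfl
    have hmod := top_coeff_modEq_of_sum_range_eq h0 h
    rw [← hp] at hmod
    obtain ⟨t, ht⟩ := Int.modEq_iff_dvd.mp hmod
    have ht0 : 0 ≤ t := by nlinarith
    lift t to ℕ using ht0
    obtain ⟨a, ha⟩ := exists_sum_range_eq_of_mem_closure (halg (m + 1) (by omega) le_rfl)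
    refine ih (fun k hk hkm => halg k hk (by omega)) (fun j hj hjm => hβ j hj (by omega))
      (fun j => c j + t * a j) ?_
    have ha' : (p (m + 1) : ℤ) * ω (m + 1) = ∑ j ∈ range (m + 1), (a j : ℤ) * ω j := by
      exact_mod_cast ha
    rw [sum_range_succ _ (m + 1), sum_range_succ _ (m + 1)] at h
    push_cast
    simp only [add_mul, sum_add_distrib, mul_assoc, ← mul_sum, ← ha']
    linear_combination h + (ω (m + 1) : ℤ) * ht

theorem statement3_general (n : ℕ) (ω : ℕ → ℕ)
    (hpos : ∀ k ≤ n + 1, 0 < ω k)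
    (d p : ℕ → ℕ)
    (hd : ∀ k, d k = (Finset.range (k + 1)).gcd ω)
    (hp : ∀ k, 1 ≤ k → p k = d (k - 1) / d k)
    (halg : ∀ k, 1 ≤ k → k ≤ n →
      (p k * ω k) ∈ AddSubmonoid.closure (ω '' {j | j < k})) :
    ∀ k (hk1 : 1 ≤ k), k ≤ n →
      ∀ β : Fin k → ℤ,
        ((p k : ℤ) * (ω k : ℤ) = ∑ j : Fin k, β j * (ω (j : ℕ) : ℤ)) →
        (∀ j : Fin k, 1 ≤ (j : ℕ) → 0 ≤ β j ∧ β j < (p (j : ℕ) : ℤ)) →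
        0 ≤ β ⟨0, hk1⟩ := by
  intro k hk1 hkn β heq hβ
  obtain ⟨m, rfl⟩ := Nat.exists_eq_add_of_le' hk1
  have hp' (k : ℕ) : p (k + 1) = (range (k + 1)).gcd ω / (range (k + 2)).gcd ω := by
    rw [hp (k + 1) (by omega), hd, hd, Nat.add_sub_cancel]
  let B : ℕ → ℤ := fun j => if hj : j < m + 1 then β ⟨j, hj⟩ else 0
  obtain ⟨c, hc⟩ := exists_sum_range_eq_of_mem_closure (halg (m + 1) hk1 hkn)
  have hsum : ∑ j ∈ range (m + 1), B j * ω j = ∑ j ∈ range (m + 1), (c j : ℤ) * ω j := by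
    rw [← Fin.sum_univ_eq_sum_range (fun j => B j * ω j)]
    simp only [B, Fin.is_lt, dif_pos, Fin.eta, ← heq]
    exact_mod_cast hc
  exact zero_coeff_nonneg_of_sum_range_eq (hpos 0 (by omega)) hp'
    (fun j hj hjm => halg j hj (by omega))
    (fun j hj hjm => by
      simpa only [B, dif_pos (show j < m + 1 by omega)] using hβ ⟨j, by omega⟩ hj) c hsum

/-- For an algebraic key sequence, in the unique representation
p_k·ω_k = Σ_{j<k} β_{k,j}·ω_j with 0 ≤ β_{k,j} < p_j for 1 ≤ j ≤ k-1,
the coefficient β_{k,0} is nonnegative. -/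
theorem statement3 (n : ℕ) (ω : ℕ → ℕ)
    (hpos : ∀ k ≤ n + 1, 0 < ω k)
    (d p : ℕ → ℕ)
    (hd : ∀ k, d k = (Finset.range (k + 1)).gcd ω)
    (hp : ∀ k, 1 ≤ k → p k = d (k - 1) / d k)
    (hgcd : d (n + 1) = 1)
    (hkey : ∀ k, 1 ≤ k → k ≤ n → ω (k + 1) < p k * ω k)
    (halg : ∀ k, 1 ≤ k → k ≤ n →
      (p k * ω k) ∈ AddSubmonoid.closure (ω '' {j | j < k})) :
    ∀ k (hk1 : 1 ≤ k), k ≤ n →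
      ∀ β : Fin k → ℤ,
        ((p k : ℤ) * (ω k : ℤ) = ∑ j : Fin k, β j * (ω (j : ℕ) : ℤ)) →
        (∀ j : Fin k, 1 ≤ (j : ℕ) → 0 ≤ β j ∧ β j < (p (j : ℕ) : ℤ)) →
        0 ≤ β ⟨0, hk1⟩ :=
  statement3_general n ω hpos d p hd hp halg
end

section
/- Let (ω_0,...,ω_{n+1}) be a key sequence and let (ω_0, ω_{i_1},...,ω_{i_l}, ω_{n+1}) be its essential subsequence, where {i_1 < ... < i_l} = {k : 1 ≤ k ≤ n, p_k ≥ 2}. Then the essential subsequence is itself a key sequence, and it is essential (all its intermediate p-values are at least 2). -/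
/-!
At an inessential index (`p_k = 1`) the prefix gcd does not change and the key inequality reads
`ω_{k+1} < ω_k`. So across a gap `e_j < k < e_{j+1}` of the essential subsequence the prefix gcd
is constant and `ω` decreases: the prefix gcds and the ratios `p` of the subsequence are those of
the original sequence at the essential indices, and the key inequality at `e_j` propagates to
`ω_{e_{j+1}} < p_{e_j} ω_{e_j}`.
-/

open Finset

/-- The paper's `d_k`. -/
def prefixGcd (ω : ℕ → ℕ) (k : ℕ) : ℕ := (range (k + 1)).gcd ω

/-- The paper's `p_k`; only meaningful for `k ≥ 1`, as `0 - 1 = 0` in `ℕ`. -/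
def gcdRatio (ω : ℕ → ℕ) (k : ℕ) : ℕ := prefixGcd ω (k - 1) / prefixGcd ω k

namespace prefixGcd

variable {ω : ℕ → ℕ}

lemma succ (ω : ℕ → ℕ) (k : ℕ) : prefixGcd ω (k + 1) = Nat.gcd (ω (k + 1)) (prefixGcd ω k) := by
  rw [prefixGcd, range_add_one, gcd_insert]
  rfl

lemma pos (h0 : 0 < ω 0) (k : ℕ) : 0 < prefixGcd ω k :=
  Nat.pos_of_ne_zero fun h =>
    h0.ne' ((gcd_eq_zero_iff.mp h) 0 (mem_range.mpr k.succ_pos))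

lemma succ_dvd (ω : ℕ → ℕ) (k : ℕ) : prefixGcd ω (k + 1) ∣ prefixGcd ω k :=
  gcd_mono (range_subset_range.mpr (k + 1).le_succ)

lemma succ_eq_of_gcdRatio_lt_two (h0 : 0 < ω 0) {k : ℕ} (h : gcdRatio ω (k + 1) < 2) :
    prefixGcd ω (k + 1) = prefixGcd ω k := by
  have hdiv := succ_dvd ω k
  have hquot : 0 < prefixGcd ω k / prefixGcd ω (k + 1) :=
    Nat.div_pos (Nat.le_of_dvd (pos h0 k) hdiv) (pos h0 (k + 1))
  exact Nat.eq_of_dvd_of_div_eq_one hdiv (by simp only [gcdRatio, Nat.add_sub_cancel] at h; omega)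

lemma eq_of_gcdRatio_lt_two (h0 : 0 < ω 0) {a b : ℕ} (hab : a ≤ b)
    (h : ∀ k, a < k → k ≤ b → gcdRatio ω k < 2) : prefixGcd ω b = prefixGcd ω a := by
  induction b, hab using Nat.le_induction with
  | base => rfl
  | succ b hab ih =>
    rw [succ_eq_of_gcdRatio_lt_two h0 (h (b + 1) (by omega) le_rfl),
      ih fun k hk hkb => h k hk (by omega)]

lemma comp_eq {e : ℕ → ℕ} {m : ℕ} (he0 : e 0 = 0) (hmono : StrictMonoOn e (Set.Iic m))
    (hgap : ∀ j < m, prefixGcd ω (e (j + 1) - 1) = prefixGcd ω (e j)) :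
    ∀ j ≤ m, prefixGcd (fun i => ω (e i)) j = prefixGcd ω (e j) := by
  intro j hj
  induction j with
  | zero => simp [prefixGcd, he0]
  | succ j ih =>
    have hlt : e j < e (j + 1) :=
      hmono (Set.mem_Iic.mpr (by omega)) (Set.mem_Iic.mpr hj) j.lt_succ_self
    obtain ⟨k, hk⟩ : ∃ k, e (j + 1) = k + 1 := ⟨e (j + 1) - 1, by omega⟩
    have hgapj := hgap j hj
    rw [hk, Nat.add_sub_cancel] at hgapj
    rw [succ, ih (by omega), hk, succ, hgapj]

lemma gcdRatio_comp_eq {e : ℕ → ℕ} {m : ℕ} (he0 : e 0 = 0) (hmono : StrictMonoOn e (Set.Iic m))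
    (hgap : ∀ j < m, prefixGcd ω (e (j + 1) - 1) = prefixGcd ω (e j)) {j : ℕ} (hj1 : 1 ≤ j)
    (hjm : j ≤ m) : gcdRatio (fun i => ω (e i)) j = gcdRatio ω (e j) := by
  obtain ⟨i, rfl⟩ : ∃ i, j = i + 1 := ⟨j - 1, by omega⟩
  rw [gcdRatio, gcdRatio, comp_eq he0 hmono hgap _ (by omega), comp_eq he0 hmono hgap _ hjm,
    Nat.add_sub_cancel, hgap i hjm]

end prefixGcd

lemma lt_mul_of_key_of_gap {ω p : ℕ → ℕ} {a b : ℕ} (hab : a < b)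
    (hkey : ∀ k, a ≤ k → k < b → ω (k + 1) < p k * ω k)
    (hgap : ∀ k, a < k → k < b → p k < 2) : ω b < p a * ω a := by
  induction b, hab using Nat.le_induction with
  | base => exact hkey a le_rfl a.lt_succ_self
  | succ b hab ih =>
    have hstep := hkey b (by omega) b.lt_succ_self
    have hpb := hgap b hab b.lt_succ_self
    have hpb_mul : p b * ω b ≤ ω b := mul_le_of_le_one_left (ω b).zero_le (by omega)
    exact lt_of_lt_of_le hstep (hpb_mul.trans (ih (fun k hk hkb => hkey k hk (by omega))
      (fun k hk hkb => hgap k hk (by omega))).le)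

lemma StrictMonoOn.ne_of_between {e : ℕ → ℕ} {m i j k : ℕ} (hmono : StrictMonoOn e (Set.Iic m))
    (hi : i ≤ m) (hj : j + 1 ≤ m) (hlo : e j < k) (hhi : k < e (j + 1)) : e i ≠ k := by
  rintro rfl
  have h1 := (hmono.lt_iff_lt (Set.mem_Iic.mpr (by omega)) (Set.mem_Iic.mpr hi)).mp hlo
  have h2 := (hmono.lt_iff_lt (Set.mem_Iic.mpr hi) (Set.mem_Iic.mpr hj)).mp hhi
  omega

/-- The essential subsequence (ω₀, ω_{i₁},...,ω_{i_l}, ω_{n+1}) of a key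
sequence, where {i₁ < ... < i_l} = {k : 1 ≤ k ≤ n, p_k ≥ 2}, is itself a key
sequence, and it is essential. -/
theorem statement8 (n l : ℕ) (ω : ℕ → ℕ)
    (hpos : ∀ k ≤ n + 1, 0 < ω k)
    (d p : ℕ → ℕ)
    (hd : ∀ k, d k = (Finset.range (k + 1)).gcd ω)
    (hp : ∀ k, 1 ≤ k → p k = d (k - 1) / d k)
    (hgcd : d (n + 1) = 1)
    (hkey : ∀ k, 1 ≤ k → k ≤ n → ω (k + 1) < p k * ω k)
    -- e enumerates the indices of the essential subsequence
    (e : ℕ → ℕ) (he0 : e 0 = 0) (helast : e (l + 1) = n + 1)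
    (hmono : StrictMonoOn e (Set.Iic (l + 1)))
    (hess : ∀ j, 1 ≤ j → j ≤ l → 1 ≤ e j ∧ e j ≤ n ∧ 2 ≤ p (e j))
    (hall : ∀ k, 1 ≤ k → k ≤ n → 2 ≤ p k → ∃ j, 1 ≤ j ∧ j ≤ l ∧ e j = k)
    (d' p' : ℕ → ℕ)
    (hd' : ∀ k, d' k = (Finset.range (k + 1)).gcd (fun j => ω (e j)))
    (hp' : ∀ k, 1 ≤ k → p' k = d' (k - 1) / d' k) :
    d' (l + 1) = 1 ∧
    (∀ j, 1 ≤ j → j ≤ l → ω (e (j + 1)) < p' j * ω (e j)) ∧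
    (∀ j, 1 ≤ j → j ≤ l → 2 ≤ p' j) := by
  obtain rfl : d = prefixGcd ω := funext hd
  obtain rfl : d' = prefixGcd fun j => ω (e j) := funext hd'
  have hω0 : 0 < ω 0 := hpos 0 (Nat.zero_le _)
  have hlt : ∀ j < l + 1, e j < e (j + 1) := fun j hj =>
    hmono (Set.mem_Iic.mpr hj.le) (Set.mem_Iic.mpr hj) j.lt_succ_self
  have hle : ∀ j ≤ l + 1, e j ≤ n + 1 := fun j hj =>
    helast ▸ hmono.monotoneOn (Set.mem_Iic.mpr hj) Set.self_mem_Iic hj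
  have hgap : ∀ j < l + 1, ∀ k, e j < k → k < e (j + 1) → 1 ≤ k ∧ k ≤ n ∧ p k < 2 := by
    intro j hj k hlo hhi
    have := hle (j + 1) hj
    refine ⟨by omega, by omega, Nat.lt_of_not_le fun hk => ?_⟩
    obtain ⟨i, -, hil, hi⟩ := hall k (by omega) (by omega) hk
    exact hmono.ne_of_between (by omega) hj hlo hhi hi
  have hpred : ∀ j < l + 1, prefixGcd ω (e (j + 1) - 1) = prefixGcd ω (e j) := by
    intro j hj
    refine prefixGcd.eq_of_gcdRatio_lt_two hω0 (by have := hlt j hj; omega) fun k hk hkb => ?_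
    obtain ⟨hk1, -, hpk⟩ := hgap j hj k hk (by omega)
    rwa [hp k hk1] at hpk
  have hp'e : ∀ j, 1 ≤ j → j ≤ l → p' j = p (e j) := fun j hj1 hjl => by
    rw [hp' j hj1, hp (e j) (hess j hj1 hjl).1]
    exact prefixGcd.gcdRatio_comp_eq he0 hmono hpred hj1 (by omega)
  refine ⟨?_, fun j hj1 hjl => ?_, fun j hj1 hjl => ?_⟩
  · rw [prefixGcd.comp_eq he0 hmono hpred _ le_rfl, helast, hgcd]
  · obtain ⟨he1, hen, -⟩ := hess j hj1 hjl
    have := hle (j + 1) (by omega)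
    rw [hp'e j hj1 hjl]
    exact lt_mul_of_key_of_gap (hlt j (by omega)) (fun k hk hkb => hkey k (by omega) (by omega))
      fun k hk hkb => (hgap j (by omega) k hk hkb).2.2
  · rw [hp'e j hj1 hjl]
    exact (hess j hj1 hjl).2.2
end

section
/- Let (ω_0,...,ω_{n+1}) be a key sequence with n ≥ 1. Then ω_{k} < p_{k-1}·p_{k-2}·...·p_1·ω_1 ≤ ω_0·ω_1 for all 2 ≤ k ≤ n+1; in particular every entry of a key sequence is strictly less than ω_0·ω_1 + max(ω_0, ω_1) (a uniform bound in terms of the first two entries). -/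
/-!
The prefix gcds `d k` form a divisibility chain starting at `d 0 = ω 0`, so the ratios
`p k = d (k - 1) / d k` telescope: `p 1 ⋯ p m * d m = ω 0`, whence `p 1 ⋯ p m ≤ ω 0`.
Chaining the key inequalities `ω (k + 1) < p k * ω k` from `k = 1` gives the rest.
-/

open Finset

theorem prod_Icc_div_mul_eq {d : ℕ → ℕ} (hd : ∀ k, d (k + 1) ∣ d k) (m : ℕ) :
    (∏ j ∈ Icc 1 m, d (j - 1) / d j) * d m = d 0 := by
  induction m with
  | zero => simp
  | succ m ih =>
    rw [prod_Icc_succ_top (by omega), Nat.add_sub_cancel, mul_assoc,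
      Nat.div_mul_cancel (hd m), ih]

theorem prod_Icc_div_le {d : ℕ → ℕ} (hd : ∀ k, d (k + 1) ∣ d k) {m : ℕ} (hm : 0 < d m) :
    ∏ j ∈ Icc 1 m, d (j - 1) / d j ≤ d 0 := by
  conv_rhs => rw [← prod_Icc_div_mul_eq hd m]
  exact Nat.le_mul_of_pos_right _ hm

theorem lt_prod_Icc_mul_of_lt_mul {ω p : ℕ → ℕ} {n : ℕ}
    (h : ∀ k, 1 ≤ k → k ≤ n → ω (k + 1) < p k * ω k) {m : ℕ} (hm : 1 ≤ m) (hmn : m ≤ n) :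
    ω (m + 1) < (∏ j ∈ Icc 1 m, p j) * ω 1 := by
  induction m, hm using Nat.le_induction with
  | base => simpa using h 1 le_rfl hmn
  | succ m hm ih =>
    calc ω (m + 2) < p (m + 1) * ω (m + 1) := h (m + 1) (by omega) hmn
      _ ≤ p (m + 1) * ((∏ j ∈ Icc 1 m, p j) * ω 1) :=
          Nat.mul_le_mul_left _ (ih (by omega)).le
      _ = (∏ j ∈ Icc 1 (m + 1), p j) * ω 1 := by
          rw [prod_Icc_succ_top (by omega)]
          ring

theorem statement13_general (n : ℕ) (ω : ℕ → ℕ)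
    (hpos : ∀ k ≤ n + 1, 0 < ω k)
    (d p : ℕ → ℕ)
    (hd : ∀ k, d k = (Finset.range (k + 1)).gcd ω)
    (hp : ∀ k, 1 ≤ k → p k = d (k - 1) / d k)
    (hkey : ∀ k, 1 ≤ k → k ≤ n → ω (k + 1) < p k * ω k) :
    (∀ k, 2 ≤ k → k ≤ n + 1 →
      ω k < (∏ j ∈ Finset.Icc 1 (k - 1), p j) * ω 1 ∧
      (∏ j ∈ Finset.Icc 1 (k - 1), p j) * ω 1 ≤ ω 0 * ω 1) ∧
    (∀ k, k ≤ n + 1 → ω k < ω 0 * ω 1 + max (ω 0) (ω 1)) := by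
  have hω₀ : 0 < ω 0 := hpos 0 (by omega)
  have hω₁ : 0 < ω 1 := hpos 1 (by omega)
  have hd_dvd : ∀ k, d (k + 1) ∣ d k := fun k => by
    rw [hd, hd]
    exact gcd_mono (range_subset_range.2 (by omega))
  have hd_pos : ∀ k, 0 < d k := fun k => by
    rw [hd]
    exact Nat.pos_of_ne_zero fun h => hω₀.ne' (gcd_eq_zero_iff.1 h 0 (by simp))
  have hd₀ : d 0 = ω 0 := by simp [hd]
  have hprod_le : ∀ m, ∏ j ∈ Icc 1 m, p j ≤ ω 0 := fun m => by
    rw [prod_congr rfl fun j hj => hp j (mem_Icc.1 hj).1, ← hd₀]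
    exact prod_Icc_div_le hd_dvd (hd_pos m)
  have hlt : ∀ k, 2 ≤ k → k ≤ n + 1 → ω k < (∏ j ∈ Icc 1 (k - 1), p j) * ω 1 := by
    intro k hk hkn
    obtain ⟨m, rfl⟩ : ∃ m, k = m + 1 := ⟨k - 1, by omega⟩
    exact lt_prod_Icc_mul_of_lt_mul hkey (by omega) (by omega)
  have hbound : ∀ k, (∏ j ∈ Icc 1 (k - 1), p j) * ω 1 ≤ ω 0 * ω 1 :=
    fun k => Nat.mul_le_mul_right _ (hprod_le _)
  refine ⟨fun k hk hkn => ⟨hlt k hk hkn, hbound k⟩, fun k hkn => ?_⟩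
  rcases lt_or_ge k 2 with hk | hk
  · have hω₀₁ : 0 < ω 0 * ω 1 := Nat.mul_pos hω₀ hω₁
    interval_cases k
    · exact lt_add_of_pos_of_le hω₀₁ (le_max_left _ _)
    · exact lt_add_of_pos_of_le hω₀₁ (le_max_right _ _)
  · exact ((hlt k hk hkn).trans_le (hbound k)).trans_le (Nat.le_add_right _ _)

/-- For a key sequence (ω₀,...,ω_{n+1}) with n ≥ 1:
ω_k < p_{k-1}···p_1·ω_1 ≤ ω₀·ω₁ for 2 ≤ k ≤ n+1; in particular every entry is
strictly less than ω₀·ω₁ + max(ω₀, ω₁). -/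
theorem statement13 (n : ℕ) (hn : 1 ≤ n) (ω : ℕ → ℕ)
    (hpos : ∀ k ≤ n + 1, 0 < ω k)
    (d p : ℕ → ℕ)
    (hd : ∀ k, d k = (Finset.range (k + 1)).gcd ω)
    (hp : ∀ k, 1 ≤ k → p k = d (k - 1) / d k)
    (hgcd : d (n + 1) = 1)
    (hkey : ∀ k, 1 ≤ k → k ≤ n → ω (k + 1) < p k * ω k) :
    (∀ k, 2 ≤ k → k ≤ n + 1 →
      ω k < (∏ j ∈ Finset.Icc 1 (k - 1), p j) * ω 1 ∧
      (∏ j ∈ Finset.Icc 1 (k - 1), p j) * ω 1 ≤ ω 0 * ω 1) ∧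
    (∀ k, k ≤ n + 1 → ω k < ω 0 * ω 1 + max (ω 0) (ω 1)) :=
  statement13_general n ω hpos d p hd hp hkey
end
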